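/- Let I be a finite type with functions inv, resp : I → ℝ satisfying inv(a) ≤ resp(a) for all a, and define a → b iff resp(a) < inv(b). Let S be a subset of I and let r₀ be a strict linear order on S such that for all a, b ∈ S, a → b implies r₀ a b. Then there exists a strict linear order r on all of I such that (i) for all a, b ∈ S, r a b iff r₀ a b, and (ii) for all a, b ∈ I, a → b implies r a b. -/

import Mathlib

/-!
Real-time precedence `R a b := resp a < inv b` is a strict order on all instances (this is where
`inv ≤ resp` enters), and on `S` it is contained in `r₀`. A path in `R ∪ r₀` collapses, by
transitivity of both relations, to a single `R`-step or to an `r₀`-step `s → t` padded by at most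
one `R`-step on each side. A cycle would then give `r₀ s t` together with `t = s` or `R t s`,
hence `r₀ t s`, which is impossible. So the transitive closure of `R ∪ r₀` is a strict order; by
Szpilrajn's theorem it extends to a strict total order, which agrees with the total order `r₀`
on `S`.
-/

open Relation

theorem exists_isStrictTotalOrder_le {α : Type*} (r : α → α → Prop) [IsStrictOrder α r] :
    ∃ s : α → α → Prop, IsStrictTotalOrder α s ∧ r ≤ s := by
  have : IsPartialOrder α (ReflGen r) :=
    { antisymm := fun a b hab hba => by
        cases hab with
        | refl => rfl
        | single hab =>
          cases hba with
          | refl => rfl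
          | single hba => exact absurd hba (asymm hab) }
  obtain ⟨l, hl, hrl⟩ := extend_partialOrder (ReflGen r)
  refine ⟨fun a b => l a b ∧ a ≠ b, ?_, fun a b hab => ⟨hrl a b (.single hab), ne_of_irrefl hab⟩⟩
  exact
    { irrefl := fun a h => h.2 rfl
      trans := fun a b c hab hbc =>
        ⟨_root_.trans hab.1 hbc.1, fun hac => hab.2 (antisymm hab.1 (hac ▸ hbc.1))⟩
      trichotomous := fun a b hab hba => by
        by_contra hne
        rcases total_of l a b with h | h
        · exact hab ⟨h, hne⟩
        · exact hba ⟨h, Ne.symm hne⟩ }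

theorem rel_iff_of_le_of_trichotomous {α β : Type*} {r : α → α → Prop} [IsStrictOrder α r]
    {r₀ : β → β → Prop} [Std.Trichotomous r₀] (f : β → α)
    (h : ∀ a b, r₀ a b → r (f a) (f b)) (a b : β) : r (f a) (f b) ↔ r₀ a b := by
  refine ⟨fun hab => ?_, h a b⟩
  rcases trichotomous_of r₀ a b with hab₀ | rfl | hba₀
  · exact hab₀
  · exact absurd hab (irrefl _)
  · exact absurd (h b a hba₀) (asymm hab)

section ReflGen

variable {β : Type*} {r : β → β → Prop} [IsTrans β r] {a b c : β}

theorem reflGen_trans_rel (hab : ReflGen r a b) (hbc : r b c) : r a c := by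
  cases hab with
  | refl => exact hbc
  | single hab => exact _root_.trans hab hbc

theorem rel_trans_reflGen (hab : r a b) (hbc : ReflGen r b c) : r a c := by
  cases hbc with
  | refl => exact hab
  | single hbc => exact _root_.trans hab hbc

end ReflGen

section Extension

variable {α : Type*} {R : α → α → Prop} {S : Set α} {r₀ : S → S → Prop}

theorem reflGen_subtype_of_le (h : ∀ a b : S, R a b → r₀ a b) {a b : S} (hab : ReflGen R a b) :
    ReflGen r₀ a b := by
  rcases (reflGen_iff _ _ _).1 hab with hba | hab
  · exact Subtype.ext hba ▸ .refl
  · exact .single (h a b hab)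

theorem transGen_sup_map_val_cases [IsTrans α R] [IsTrans S r₀] (h : ∀ a b : S, R a b → r₀ a b)
    {a b : α} (hab : TransGen (R ⊔ Relation.Map r₀ (↑) (↑)) a b) :
    R a b ∨ ∃ s t : S, ReflGen R a s ∧ r₀ s t ∧ ReflGen R t b := by
  induction hab with
  | single hab =>
    rcases hab with hab | ⟨s, t, hst, rfl, rfl⟩
    · exact .inl hab
    · exact .inr ⟨s, t, .refl, hst, .refl⟩
  | tail _ hbc ih =>
    rcases hbc with hbc | ⟨s', t', hst', rfl, rfl⟩
    · rcases ih with hab | ⟨s, t, has, hst, htb⟩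
      · exact .inl (_root_.trans hab hbc)
      · exact .inr ⟨s, t, has, hst, .single (reflGen_trans_rel htb hbc)⟩
    · rcases ih with hab | ⟨s, t, has, hst, hts'⟩
      · exact .inr ⟨s', t', .single hab, hst', .refl⟩
      · have hss' : r₀ s s' := rel_trans_reflGen hst (reflGen_subtype_of_le h hts')
        exact .inr ⟨s, t', has, _root_.trans hss' hst', .refl⟩

theorem isStrictOrder_transGen_sup_map_val [IsStrictOrder α R] [IsStrictOrder S r₀]
    (h : ∀ a b : S, R a b → r₀ a b) :
    IsStrictOrder α (TransGen (R ⊔ Relation.Map r₀ (↑) (↑))) where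
  irrefl a haa := by
    rcases transGen_sup_map_val_cases h haa with haa | ⟨s, t, has, hst, hta⟩
    · exact irrefl a haa
    · exact irrefl s (rel_trans_reflGen hst (reflGen_subtype_of_le h (_root_.trans hta has)))
  trans _ _ _ := TransGen.trans

theorem exists_isStrictTotalOrder_extending_of_restrict_le (R : α → α → Prop) [IsStrictOrder α R]
    (r₀ : S → S → Prop) [IsStrictOrder S r₀] (h : ∀ a b : S, R a b → r₀ a b) :
    ∃ r : α → α → Prop, IsStrictTotalOrder α r ∧ (∀ a b : S, r₀ a b → r a b) ∧ R ≤ r := by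
  have := isStrictOrder_transGen_sup_map_val h
  obtain ⟨r, hr, hle⟩ := exists_isStrictTotalOrder_le (TransGen (R ⊔ Relation.Map r₀ (↑) (↑)))
  exact ⟨r, hr, fun a b hab => hle _ _ (.single (.inr ⟨a, b, hab, rfl, rfl⟩)),
    fun a b hab => hle _ _ (.single (.inl hab))⟩

end Extension

theorem linearization_extension_general {I : Type*} (inv resp : I → ℝ)
    (hir : ∀ a, inv a ≤ resp a) (S : Set I) (r₀ : S → S → Prop)
    (hr₀ : IsStrictTotalOrder S r₀)
    (hrt₀ : ∀ a b : S, resp a.1 < inv b.1 → r₀ a b) :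
    ∃ r : I → I → Prop, IsStrictTotalOrder I r ∧
      (∀ a b : S, (r a.1 b.1 ↔ r₀ a b)) ∧
      (∀ a b : I, resp a < inv b → r a b) := by
  have : IsStrictOrder I (fun a b => resp a < inv b) :=
    { irrefl a h := (h.trans_le (hir a)).false
      trans a b c hab hbc := hab.trans_le ((hir b).trans hbc.le) }
  obtain ⟨r, hr, hS, hrt⟩ :=
    exists_isStrictTotalOrder_extending_of_restrict_le (fun a b => resp a < inv b) r₀ hrt₀
  exact ⟨r, hr, rel_iff_of_le_of_trichotomous Subtype.val hS, hrt⟩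

/-- Linearization insertion: let `I` be a finite type of operation instances with
invocation and response times `inv, resp : I → ℝ` satisfying `inv a ≤ resp a`, and
say `a` precedes `b` in real time iff `resp a < inv b`. Given a subset `S ⊆ I` and a
strict linear order `r₀` on `S` such that real-time precedence between members of
`S` implies `r₀`, there is a strict linear order `r` on all of `I` agreeing with
`r₀` on `S` and such that real-time precedence between any two instances implies
`r`. -/
theorem linearization_extension {I : Type*} [Finite I] (inv resp : I → ℝ)
    (hir : ∀ a, inv a ≤ resp a) (S : Set I) (r₀ : S → S → Prop)
    (hr₀ : IsStrictTotalOrder S r₀)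
    (hrt₀ : ∀ a b : S, resp a.1 < inv b.1 → r₀ a b) :
    ∃ r : I → I → Prop, IsStrictTotalOrder I r ∧
      (∀ a b : S, (r a.1 b.1 ↔ r₀ a b)) ∧
      (∀ a b : I, resp a < inv b → r a b) :=
  linearization_extension_general inv resp hir S r₀ hr₀ hrt₀
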